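/- arXiv:1102.4367 — 7 statements merged into one kernel-verified Lean document; each statement's English description precedes it below -/
import Mathlib

section
/- Let A and B be real symmetric n×n matrices, and let N = ⋂_{i,j=1}^{n-1} ker([Aⁱ, Bʲ]). Then N is the smallest subspace containing all common eigenvectors of A and B; in particular, A and B have a common eigenvector if and only if N ≠ {0}. -/
open Matrix Polynomial

private lemma shemesh_pow_mem_span {n : ℕ} (hn : 0 < n) (M : Matrix (Fin n) (Fin n) ℝ) (i : ℕ) :
    M ^ i ∈ Submodule.span ℝ {X : Matrix (Fin n) (Fin n) ℝ | ∃ k < n, X = M ^ k} := by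
  have hmon := M.charpoly_monic
  have hdeg : M.charpoly.natDegree = n := by simp [Matrix.charpoly_natDegree_eq_dim]
  have hne : M.charpoly ≠ 1 := by
    intro h; rw [h] at hdeg; simp at hdeg; omega
  have hlt : ((X : ℝ[X]) ^ i %ₘ M.charpoly).natDegree < n := by
    simpa [hdeg] using Polynomial.natDegree_modByMonic_lt ((X : ℝ[X]) ^ i) hmon hne
  have heq : M ^ i = aeval M ((X : ℝ[X]) ^ i %ₘ M.charpoly) := by
    rw [Polynomial.aeval_modByMonic_eq_self_of_root (Matrix.aeval_self_charpoly M)]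
    simp
  rw [heq, Polynomial.aeval_eq_sum_range' hlt]
  exact Submodule.sum_mem _ fun k hk => Submodule.smul_mem _ _
    (Submodule.subset_span ⟨k, Finset.mem_range.mp hk, rfl⟩)

private lemma shemesh_comm_ext {n : ℕ} (hn : 0 < n) (M C : Matrix (Fin n) (Fin n) ℝ)
    (v : Fin n → ℝ)
    (h : ∀ k, 1 ≤ k → k < n → (M ^ k * C) *ᵥ v = (C * M ^ k) *ᵥ v) (i : ℕ) :
    (M ^ i * C) *ᵥ v = (C * M ^ i) *ᵥ v := by
  let U : Submodule ℝ (Matrix (Fin n) (Fin n) ℝ) :=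
    { carrier := {X | (X * C) *ᵥ v = (C * X) *ᵥ v}
      add_mem' := by
        intro a b ha hb
        simp only [Set.mem_setOf_eq] at *
        rw [add_mul, mul_add, Matrix.add_mulVec, Matrix.add_mulVec, ha, hb]
      zero_mem' := by simp
      smul_mem' := by
        intro c a ha
        simp only [Set.mem_setOf_eq] at *
        rw [smul_mul_assoc, mul_smul_comm, Matrix.smul_mulVec, Matrix.smul_mulVec,
          ha] }
  have hsub : {X : Matrix (Fin n) (Fin n) ℝ | ∃ k < n, X = M ^ k} ⊆ U := by
    rintro X ⟨k, hk, rfl⟩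
    rcases Nat.eq_zero_or_pos k with rfl | hk1
    · show (M ^ 0 * C) *ᵥ v = (C * M ^ 0) *ᵥ v; simp
    · exact h k hk1 hk
  exact Submodule.span_le.mpr hsub (shemesh_pow_mem_span hn M i)

private lemma shemesh_eig_pow {n : ℕ} (A : Matrix (Fin n) (Fin n) ℝ) (v : Fin n → ℝ) (μ : ℝ)
    (h : A *ᵥ v = μ • v) (i : ℕ) : A ^ i *ᵥ v = μ ^ i • v := by
  induction i with
  | zero => simp
  | succ k ih =>
    rw [pow_succ, ← Matrix.mulVec_mulVec, h, Matrix.mulVec_smul, ih, smul_smul, pow_succ,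
      mul_comm]

theorem shemesh_subspace_spanned_by_common_eigenvectors {n : ℕ}
    (A B : Matrix (Fin n) (Fin n) ℝ) (hA : A.IsSymm) (hB : B.IsSymm)
    (N : Submodule ℝ (Fin n → ℝ))
    (hN : N = ⨅ i ∈ Finset.Icc 1 (n - 1), ⨅ j ∈ Finset.Icc 1 (n - 1),
      LinearMap.ker (Matrix.toLin' (A ^ i * B ^ j - B ^ j * A ^ i))) :
    N = Submodule.span ℝ
        {v : Fin n → ℝ | v ≠ 0 ∧ (∃ μ : ℝ, A *ᵥ v = μ • v) ∧ (∃ ν : ℝ, B *ᵥ v = ν • v)} ∧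
    ((∃ v : Fin n → ℝ, v ≠ 0 ∧ (∃ μ : ℝ, A *ᵥ v = μ • v) ∧ (∃ ν : ℝ, B *ᵥ v = ν • v)) ↔
      N ≠ ⊥) := by
  rcases Nat.eq_zero_or_pos n with rfl | hn
  · haveI : Subsingleton (Fin 0 → ℝ) := ⟨fun a b => funext fun i => i.elim0⟩
    haveI := (Submodule.subsingleton_iff ℝ (M := Fin 0 → ℝ)).mpr inferInstance
    refine ⟨Subsingleton.elim _ _, ?_⟩
    constructor
    · rintro ⟨v, hv, -⟩
      exact absurd (funext fun i : Fin 0 => i.elim0) hv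
    · intro h
      exact absurd (Subsingleton.elim N ⊥) h
  set S : Set (Fin n → ℝ) :=
    {v : Fin n → ℝ | v ≠ 0 ∧ (∃ μ : ℝ, A *ᵥ v = μ • v) ∧ (∃ ν : ℝ, B *ᵥ v = ν • v)} with hS
  have hmemN : ∀ v : Fin n → ℝ, v ∈ N ↔ ∀ i ∈ Finset.Icc 1 (n - 1), ∀ j ∈ Finset.Icc 1 (n - 1),
      (A ^ i * B ^ j) *ᵥ v = (B ^ j * A ^ i) *ᵥ v := by
    intro v
    simp only [hN, Submodule.mem_iInf, LinearMap.mem_ker, Matrix.toLin'_apply, Matrix.sub_mulVec, sub_eq_zero]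
  -- extended commutation
  have hext : ∀ v ∈ N, ∀ i j : ℕ, (A ^ i * B ^ j) *ᵥ v = (B ^ j * A ^ i) *ᵥ v := by
    intro v hv
    rw [hmemN] at hv
    have step1 : ∀ j, 1 ≤ j → j < n → ∀ i : ℕ,
        (A ^ i * B ^ j) *ᵥ v = (B ^ j * A ^ i) *ᵥ v := fun j hj1 hj2 i =>
      shemesh_comm_ext hn A (B ^ j) v (fun k hk1 hk2 =>
        hv k (Finset.mem_Icc.mpr ⟨hk1, by omega⟩) j (Finset.mem_Icc.mpr ⟨hj1, by omega⟩)) i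
    intro i j
    exact (shemesh_comm_ext hn B (A ^ i) v
      (fun k hk1 hk2 => (step1 k hk1 hk2 i).symm) j).symm
  -- invariance of N under A and B
  have hAinv : ∀ v ∈ N, A *ᵥ v ∈ N := by
    intro v hv
    rw [hmemN]
    intro i _ j _
    have h1 : B ^ j *ᵥ (A *ᵥ v) = A *ᵥ (B ^ j *ᵥ v) := by
      have h := hext v hv 1 j
      rw [pow_one] at h
      rw [Matrix.mulVec_mulVec, Matrix.mulVec_mulVec, h]
    calc (A ^ i * B ^ j) *ᵥ (A *ᵥ v)
        = A ^ i *ᵥ (B ^ j *ᵥ (A *ᵥ v)) := (Matrix.mulVec_mulVec _ _ _).symm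
      _ = A ^ i *ᵥ (A *ᵥ (B ^ j *ᵥ v)) := by rw [h1]
      _ = (A ^ i * A * B ^ j) *ᵥ v := by rw [Matrix.mulVec_mulVec, Matrix.mulVec_mulVec]
      _ = (A ^ (i + 1) * B ^ j) *ᵥ v := by rw [← pow_succ]
      _ = (B ^ j * A ^ (i + 1)) *ᵥ v := hext v hv (i + 1) j
      _ = (B ^ j * A ^ i * A) *ᵥ v := by rw [pow_succ, mul_assoc]
      _ = (B ^ j * A ^ i) *ᵥ (A *ᵥ v) := (Matrix.mulVec_mulVec _ _ _).symm
  have hBinv : ∀ v ∈ N, B *ᵥ v ∈ N := by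
    intro v hv
    rw [hmemN]
    intro i _ j _
    have h1 : (B * A ^ i) *ᵥ v = (A ^ i * B) *ᵥ v := by
      have h := hext v hv i 1
      rw [pow_one] at h
      rw [h]
    calc (A ^ i * B ^ j) *ᵥ (B *ᵥ v)
        = (A ^ i * B ^ j * B) *ᵥ v := Matrix.mulVec_mulVec _ _ _
      _ = (A ^ i * B ^ (j + 1)) *ᵥ v := by rw [mul_assoc, ← pow_succ]
      _ = (B ^ (j + 1) * A ^ i) *ᵥ v := hext v hv i (j + 1)
      _ = (B ^ j * (B * A ^ i)) *ᵥ v := by rw [pow_succ, mul_assoc]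
      _ = B ^ j *ᵥ ((B * A ^ i) *ᵥ v) := (Matrix.mulVec_mulVec _ _ _).symm
      _ = B ^ j *ᵥ ((A ^ i * B) *ᵥ v) := by rw [h1]
      _ = (B ^ j * (A ^ i * B)) *ᵥ v := Matrix.mulVec_mulVec _ _ _
      _ = (B ^ j * A ^ i * B) *ᵥ v := by rw [mul_assoc]
      _ = (B ^ j * A ^ i) *ᵥ (B *ᵥ v) := (Matrix.mulVec_mulVec _ _ _).symm
  -- span S ≤ N
  have hSle : Submodule.span ℝ S ≤ N := by
    rw [Submodule.span_le]
    rintro v ⟨hv0, ⟨μ, hμ⟩, ⟨ν, hν⟩⟩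
    show v ∈ N
    rw [hmemN]
    intro i _ j _
    rw [← Matrix.mulVec_mulVec, ← Matrix.mulVec_mulVec, shemesh_eig_pow A v μ hμ,
      shemesh_eig_pow B v ν hν, Matrix.mulVec_smul, Matrix.mulVec_smul,
      shemesh_eig_pow A v μ hμ, shemesh_eig_pow B v ν hν]
    exact smul_comm _ _ _
  -- inner product space packaging
  have hAH : A.IsHermitian := Matrix.isHermitian_iff_isSymm.mpr hA
  have hBH : B.IsHermitian := Matrix.isHermitian_iff_isSymm.mpr hB
  have hAsym : (Matrix.toEuclideanLin A).IsSymmetric := Matrix.isHermitian_iff_isSymmetric.mp hAH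
  have hBsym : (Matrix.toEuclideanLin B).IsSymmetric := Matrix.isHermitian_iff_isSymmetric.mp hBH
  let N' : Submodule ℝ (EuclideanSpace ℝ (Fin n)) :=
    N.comap (WithLp.linearEquiv 2 ℝ (Fin n → ℝ)).toLinearMap
  have htA : ∀ x : EuclideanSpace ℝ (Fin n), Matrix.toEuclideanLin A x = A *ᵥ x := fun _ => rfl
  have htB : ∀ x : EuclideanSpace ℝ (Fin n), Matrix.toEuclideanLin B x = B *ᵥ x := fun _ => rfl
  have hAinv' : ∀ x ∈ N', Matrix.toEuclideanLin A x ∈ N' := fun x hx => hAinv x hx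
  have hBinv' : ∀ x ∈ N', Matrix.toEuclideanLin B x ∈ N' := fun x hx => hBinv x hx
  let T := (Matrix.toEuclideanLin A).restrict hAinv'
  let U := (Matrix.toEuclideanLin B).restrict hBinv'
  have hTsym : T.IsSymmetric := hAsym.restrict_invariant hAinv'
  have hUsym : U.IsSymmetric := hBsym.restrict_invariant hBinv'
  have hcomm : Commute T U := by
    refine LinearMap.ext fun x => Subtype.ext (WithLp.ofLp_injective 2 ?_)
    have hx := hext x.1 x.2 1 1
    rw [pow_one, pow_one] at hx
    show (A *ᵥ (B *ᵥ (x : Fin n → ℝ))) = (B *ᵥ (A *ᵥ (x : Fin n → ℝ)))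
    rw [Matrix.mulVec_mulVec, Matrix.mulVec_mulVec]
    exact hx
  have htop := LinearMap.IsSymmetric.iSup_iSup_eigenspace_inf_eigenspace_eq_top_of_commute
    hTsym hUsym hcomm
  -- N ≤ span S
  have hNle : N ≤ Submodule.span ℝ S := by
    have hmap : N = Submodule.map ((WithLp.linearEquiv 2 ℝ (Fin n → ℝ)).toLinearMap ∘ₗ N'.subtype) ⊤ := by
      ext v; constructor
      · intro hv; exact ⟨⟨WithLp.toLp 2 v, hv⟩, trivial, rfl⟩
      · rintro ⟨y, -, rfl⟩; exact y.2
    rw [hmap, ← htop]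
    rw [Submodule.map_iSup]
    refine iSup_le fun α => ?_
    rw [Submodule.map_iSup]
    refine iSup_le fun γ => ?_
    rintro x ⟨y, hy, rfl⟩
    obtain ⟨hy1, hy2⟩ := Submodule.mem_inf.mp hy
    rw [Module.End.mem_eigenspace_iff] at hy1 hy2
    have hy1' : A *ᵥ (y : Fin n → ℝ) = α • (y : Fin n → ℝ) := congrArg (fun z => z.1.ofLp) hy1
    have hy2' : B *ᵥ (y : Fin n → ℝ) = γ • (y : Fin n → ℝ) := congrArg (fun z => z.1.ofLp) hy2
    rcases eq_or_ne (y : Fin n → ℝ) 0 with h0 | h0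
    · show (y : Fin n → ℝ) ∈ Submodule.span ℝ S
      rw [h0]; exact Submodule.zero_mem _
    · exact Submodule.subset_span ⟨h0, ⟨α, hy1'⟩, ⟨γ, hy2'⟩⟩
  have hNS : N = Submodule.span ℝ S := le_antisymm hNle hSle
  refine ⟨hNS, ?_⟩
  constructor
  · rintro ⟨v, hv⟩ hbot
    have : v ∈ N := hSle (Submodule.subset_span hv)
    rw [hbot, Submodule.mem_bot] at this
    exact hv.1 this
  · intro hbot
    by_contra hno
    apply hbot
    rw [hNS, Submodule.span_eq_bot]
    intro x hx
    exact (hno ⟨x, hx⟩).elim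
end

section
/- Let A, B be real symmetric n×n matrices and let N = ⋂_{i,j=1}^{n-1} ker([Aⁱ, Bʲ]). Then N is invariant under both A and B, and the restrictions of A and B to N commute. -/
/-!
Restricting the exponents to `1 ≤ i, j ≤ n - 1` does not change the subspace: by Cayley–Hamilton
every power of an `n × n` matrix is a linear combination of its first `n` powers, and the
conditions `[A ^ i, B ^ j] v = 0` are linear in each power. Once all exponents are allowed,
invariance under `A` follows from the Leibniz rule `[A ^ (k + 1), Y] = A ^ k [A, Y] + [A ^ k, Y] A`,
invariance under `B` by the symmetry of the conditions in `A` and `B`, and `[A, B] v = 0` is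
itself one of the conditions.
-/

open Matrix Polynomial

theorem Ring.mul_lie {A : Type*} [NonUnitalRing A] (a b c : A) :
    ⁅a * b, c⁆ = a * ⁅b, c⁆ + ⁅a, c⁆ * b := by
  simp only [Ring.lie_def, mul_sub, sub_mul, mul_assoc]
  abel

namespace Matrix

variable {R ι : Type*} [CommRing R] [Fintype ι]

theorem lie_mulVec_eq_zero_comm {X Y : Matrix ι ι R} {v : ι → R} :
    ⁅X, Y⁆ *ᵥ v = 0 ↔ ⁅Y, X⁆ *ᵥ v = 0 := by
  rw [Ring.lie_def, Ring.lie_def, sub_mulVec, sub_mulVec, sub_eq_zero, sub_eq_zero, eq_comm]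

variable [DecidableEq ι]

theorem pow_mem_of_forall_lt_card (A : Matrix ι ι R) {P : Submodule R (Matrix ι ι R)}
    (h : ∀ k < Fintype.card ι, A ^ k ∈ P) (m : ℕ) : A ^ m ∈ P := by
  nontriviality R
  cases isEmpty_or_nonempty ι
  · simp [Subsingleton.elim (A ^ m) 0]
  have hχ : A.charpoly ≠ 1 := fun h1 => by
    simpa [h1] using (Fintype.card_pos (α := ι)).trans_eq A.charpoly_natDegree_eq_dim.symm
  have hdeg : (X ^ m %ₘ A.charpoly).natDegree < Fintype.card ι := by
    simpa using natDegree_modByMonic_lt (X ^ m) A.charpoly_monic hχ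
  rw [A.pow_eq_aeval_mod_charpoly, aeval_eq_sum_range' hdeg]
  exact P.sum_mem fun k hk => P.smul_mem _ (h k (Finset.mem_range.1 hk))

theorem lie_pow_mulVec_eq_zero_of_forall_lt_card (X B : Matrix ι ι R) {v : ι → R}
    (h : ∀ l < Fintype.card ι, ⁅X, B ^ l⁆ *ᵥ v = 0) (l : ℕ) : ⁅X, B ^ l⁆ *ᵥ v = 0 :=
  B.pow_mem_of_forall_lt_card
    (P := LinearMap.ker ((mulVecBilin R R).flip v ∘ₗ
      (LinearMap.mulLeft R X - LinearMap.mulRight R X))) h l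

def shemeshSubspace (A B : Matrix ι ι R) : Submodule R (ι → R) :=
  ⨅ k : ℕ, ⨅ l : ℕ, LinearMap.ker (toLin' ⁅A ^ k, B ^ l⁆)

variable {A B : Matrix ι ι R} {v : ι → R}

theorem mem_shemeshSubspace :
    v ∈ shemeshSubspace A B ↔ ∀ k l : ℕ, ⁅A ^ k, B ^ l⁆ *ᵥ v = 0 := by
  simp only [shemeshSubspace, Submodule.mem_iInf, LinearMap.mem_ker, toLin'_apply]

theorem shemeshSubspace_comm (A B : Matrix ι ι R) :
    shemeshSubspace A B = shemeshSubspace B A := by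
  ext v
  simp only [mem_shemeshSubspace]
  exact ⟨fun h l k => lie_mulVec_eq_zero_comm.1 (h k l),
    fun h k l => lie_mulVec_eq_zero_comm.1 (h l k)⟩

theorem shemeshSubspace_eq_iInf_Icc (A B : Matrix ι ι R) :
    shemeshSubspace A B = ⨅ i ∈ Finset.Icc 1 (Fintype.card ι - 1),
      ⨅ j ∈ Finset.Icc 1 (Fintype.card ι - 1), LinearMap.ker (toLin' ⁅A ^ i, B ^ j⁆) := by
  ext v
  simp only [mem_shemeshSubspace, Submodule.mem_iInf, LinearMap.mem_ker, toLin'_apply,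
    Finset.mem_Icc]
  refine ⟨fun h i _ j _ => h i j, fun h k l => ?_⟩
  have h_lt : ∀ i < Fintype.card ι, ∀ j < Fintype.card ι, ⁅A ^ i, B ^ j⁆ *ᵥ v = 0 := by
    intro i hi j hj
    rcases Nat.eq_zero_or_pos i with rfl | hi₀
    · simp [Ring.lie_def]
    rcases Nat.eq_zero_or_pos j with rfl | hj₀
    · simp [Ring.lie_def]
    exact h i ⟨hi₀, by omega⟩ j ⟨hj₀, by omega⟩
  have h_all_l : ∀ i < Fintype.card ι, ∀ l, ⁅B ^ l, A ^ i⁆ *ᵥ v = 0 := fun i hi l =>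
    lie_mulVec_eq_zero_comm.1 (lie_pow_mulVec_eq_zero_of_forall_lt_card _ B (h_lt i hi) l)
  exact lie_mulVec_eq_zero_comm.1
    (lie_pow_mulVec_eq_zero_of_forall_lt_card _ A (fun i hi => h_all_l i hi l) k)

theorem mulVec_mem_shemeshSubspace_left (hv : v ∈ shemeshSubspace A B) :
    A *ᵥ v ∈ shemeshSubspace A B := by
  rw [mem_shemeshSubspace] at hv ⊢
  intro k l
  calc ⁅A ^ k, B ^ l⁆ *ᵥ (A *ᵥ v)
        = ⁅A ^ (k + 1), B ^ l⁆ *ᵥ v - A ^ k *ᵥ (⁅A ^ 1, B ^ l⁆ *ᵥ v) := by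
        rw [pow_succ, Ring.mul_lie, pow_one, add_mulVec, mulVec_mulVec, mulVec_mulVec]
        abel
    _ = 0 := by rw [hv, hv, mulVec_zero, sub_zero]

theorem mulVec_mem_shemeshSubspace_right (hv : v ∈ shemeshSubspace A B) :
    B *ᵥ v ∈ shemeshSubspace A B := by
  rw [shemeshSubspace_comm] at hv ⊢
  exact mulVec_mem_shemeshSubspace_left hv

theorem mulVec_mulVec_comm_of_mem_shemeshSubspace (hv : v ∈ shemeshSubspace A B) :
    A *ᵥ (B *ᵥ v) = B *ᵥ (A *ᵥ v) := by
  have h := mem_shemeshSubspace.1 hv 1 1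
  rwa [pow_one, pow_one, Ring.lie_def, sub_mulVec, sub_eq_zero, ← mulVec_mulVec,
    ← mulVec_mulVec] at h

end Matrix

theorem shemesh_subspace_invariant_and_commuting_general {n : ℕ}
    (A B : Matrix (Fin n) (Fin n) ℝ)
    (N : Submodule ℝ (Fin n → ℝ))
    (hN : N = ⨅ i ∈ Finset.Icc 1 (n - 1), ⨅ j ∈ Finset.Icc 1 (n - 1),
      LinearMap.ker (Matrix.toLin' (A ^ i * B ^ j - B ^ j * A ^ i))) :
    (∀ v ∈ N, A *ᵥ v ∈ N) ∧ (∀ v ∈ N, B *ᵥ v ∈ N) ∧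
    (∀ v ∈ N, A *ᵥ (B *ᵥ v) = B *ᵥ (A *ᵥ v)) := by
  obtain rfl : N = shemeshSubspace A B := by
    rw [hN, shemeshSubspace_eq_iInf_Icc, Fintype.card_fin]
    rfl
  exact ⟨fun _ => mulVec_mem_shemeshSubspace_left, fun _ => mulVec_mem_shemeshSubspace_right,
    fun _ => mulVec_mulVec_comm_of_mem_shemeshSubspace⟩

theorem shemesh_subspace_invariant_and_commuting {n : ℕ}
    (A B : Matrix (Fin n) (Fin n) ℝ) (hA : A.IsSymm) (hB : B.IsSymm)
    (N : Submodule ℝ (Fin n → ℝ))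
    (hN : N = ⨅ i ∈ Finset.Icc 1 (n - 1), ⨅ j ∈ Finset.Icc 1 (n - 1),
      LinearMap.ker (Matrix.toLin' (A ^ i * B ^ j - B ^ j * A ^ i))) :
    (∀ v ∈ N, A *ᵥ v ∈ N) ∧ (∀ v ∈ N, B *ᵥ v ∈ N) ∧
    (∀ v ∈ N, A *ᵥ (B *ᵥ v) = B *ᵥ (A *ᵥ v)) :=
  shemesh_subspace_invariant_and_commuting_general A B N hN
end

section
/- The set of pairs (A,B) of complex n×n matrices that share a common eigenvector is a Zariski-closed proper subset of (ℂ^{n×n})², for n ≥ 2; in particular it has empty interior in the Euclidean topology. -/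
/-!
Shemesh's criterion: the subspace on which all commutators `[Aⁱ, Bʲ]` vanish is invariant under
`A` and `B`, and they commute on it, so it contains a common eigenvector as soon as it is nonzero;
conversely every common eigenvector lies in it. Taking all exponents `i, j` (not only `i, j < n`)
avoids Cayley–Hamilton at the price of infinitely many defining polynomials. That subspace is the
kernel of the matrix stacking all the commutators, so it is nonzero iff every `n × n` minor of that
matrix vanishes, and these minors are polynomials in the entries of `A` and `B`.

The pair `(diag(0, …, n - 1), all-ones)` has no common eigenvector, so one of these minors is a
nonzero polynomial function. Restricted to a line it is a one-variable polynomial, so if it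
vanished on an open set it would vanish everywhere; hence the set has empty interior.
-/

namespace Module.End

variable {R K V : Type*}

section CommRing

variable [CommRing R] [AddCommGroup V] [Module R V]

def shemeshSubspace (f g : End R V) : Submodule R V :=
  ⨅ (i : ℕ) (j : ℕ), LinearMap.ker (f ^ i * g ^ j - g ^ j * f ^ i)

variable {f g : End R V} {v : V}

theorem mem_shemeshSubspace :
    v ∈ shemeshSubspace f g ↔ ∀ i j : ℕ, (f ^ i * g ^ j) v = (g ^ j * f ^ i) v := by
  simp only [shemeshSubspace, Submodule.mem_iInf, LinearMap.mem_ker, LinearMap.sub_apply,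
    sub_eq_zero]

theorem shemeshSubspace_comm : shemeshSubspace f g = shemeshSubspace g f := by
  ext v
  simp only [mem_shemeshSubspace]
  exact ⟨fun h i j => (h j i).symm, fun h i j => (h j i).symm⟩

theorem mapsTo_shemeshSubspace_left :
    Set.MapsTo f (shemeshSubspace f g) (shemeshSubspace f g) := by
  intro v hv
  rw [SetLike.mem_coe, mem_shemeshSubspace] at hv ⊢
  intro i j
  have hfg : (g ^ j) (f v) = f ((g ^ j) v) := by simpa using (hv 1 j).symm
  calc (f ^ i * g ^ j) (f v) = (f ^ (i + 1) * g ^ j) v := by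
        rw [Module.End.mul_apply, hfg, pow_succ]; rfl
    _ = (g ^ j * f ^ (i + 1)) v := hv (i + 1) j
    _ = (g ^ j * f ^ i) (f v) := by rw [pow_succ]; rfl

theorem mapsTo_shemeshSubspace_right :
    Set.MapsTo g (shemeshSubspace f g) (shemeshSubspace f g) := by
  rw [shemeshSubspace_comm]
  exact mapsTo_shemeshSubspace_left

theorem commute_restrict_shemeshSubspace :
    Commute (f.restrict (mapsTo_shemeshSubspace_left (g := g)))
      (g.restrict (mapsTo_shemeshSubspace_right (f := f))) := by
  refine LinearMap.ext fun ⟨v, hv⟩ => Subtype.ext ?_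
  have hfg := mem_shemeshSubspace.mp hv 1 1
  rwa [pow_one, pow_one] at hfg

theorem mem_shemeshSubspace_of_eigenvector {a b : R} (hf : f v = a • v) (hg : g v = b • v) :
    v ∈ shemeshSubspace f g := by
  have hpow (h : End R V) (c : R) (hh : h v = c • v) (k : ℕ) : (h ^ k) v = c ^ k • v := by
    induction k with
    | zero => simp
    | succ k ih => rw [pow_succ, Module.End.mul_apply, hh, map_smul, ih, smul_smul, ← pow_succ']
  rw [mem_shemeshSubspace]
  intro i j
  simp only [Module.End.mul_apply, hpow f a hf, hpow g b hg, map_smul, smul_smul, mul_comm]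

end CommRing

variable [Field K] [IsAlgClosed K] [AddCommGroup V] [Module K V] [FiniteDimensional K V]

theorem exists_common_eigenvector_of_commute [Nontrivial V] {f g : End K V} (h : Commute f g) :
    ∃ v ≠ 0, (∃ a : K, f v = a • v) ∧ ∃ b : K, g v = b • v := by
  obtain ⟨a, ha⟩ := f.exists_eigenvalue
  have hE : Set.MapsTo g (f.eigenspace a) (f.eigenspace a) := by
    simpa using f.mapsTo_genEigenspace_of_comm h a 1
  have : Nontrivial (f.eigenspace a) := Submodule.nontrivial_iff_ne_bot.mpr ha
  obtain ⟨b, hb⟩ := exists_eigenvalue (g.restrict hE)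
  obtain ⟨⟨w, hwE⟩, hw⟩ := hb.exists_hasEigenvector
  refine ⟨w, ?_, ⟨a, mem_eigenspace_iff.mp hwE⟩, b, ?_⟩
  · simpa using hw.2
  · exact congrArg Subtype.val hw.apply_eq_smul

theorem exists_common_eigenvector_iff_shemeshSubspace_ne_bot {f g : End K V} :
    (∃ v ≠ 0, (∃ a : K, f v = a • v) ∧ ∃ b : K, g v = b • v) ↔
      shemeshSubspace f g ≠ ⊥ := by
  constructor
  · rintro ⟨v, hv, ⟨a, ha⟩, b, hb⟩ hbot
    exact hv (by simpa [hbot] using mem_shemeshSubspace_of_eigenvector ha hb)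
  · intro hS
    have : Nontrivial (shemeshSubspace f g) := Submodule.nontrivial_iff_ne_bot.mpr hS
    obtain ⟨w, hw, ⟨a, ha⟩, b, hb⟩ :=
      exists_common_eigenvector_of_commute (commute_restrict_shemeshSubspace (f := f) (g := g))
    exact ⟨w, by simpa using hw, ⟨a, congrArg Subtype.val ha⟩, b, congrArg Subtype.val hb⟩

end Module.End

namespace Matrix

section Field

variable {m n K : Type*} [Field K] [Fintype n] [DecidableEq n]

theorem exists_mulVec_eq_zero_of_span_rows_ne_top {M : Matrix m n K}
    (hM : Submodule.span K (Set.range M) ≠ ⊤) : ∃ v ≠ 0, M *ᵥ v = 0 := by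
  obtain ⟨φ, hφ, hφM⟩ := Submodule.exists_dual_map_eq_bot_of_lt_top hM.lt_top inferInstance
  have hφ_apply (x : n → K) : φ x = x ⬝ᵥ fun i => φ (Pi.single i 1) := by
    rw [LinearMap.pi_apply_eq_sum_univ φ x]
    refine Finset.sum_congr rfl fun i _ => ?_
    rw [smul_eq_mul]
    congr 2
    ext j
    simp [Pi.single_apply, eq_comm]
  refine ⟨fun i => φ (Pi.single i 1), fun hv => hφ (LinearMap.ext fun x => ?_), ?_⟩
  · simp [hφ_apply x, hv]
  · ext r
    have hr : φ (M r) ∈ (⊥ : Submodule K K) :=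
      hφM ▸ Submodule.mem_map_of_mem (Submodule.subset_span (Set.mem_range_self r))
    rw [mulVec, ← hφ_apply, (Submodule.mem_bot K).mp hr, Pi.zero_apply]

theorem exists_det_submatrix_ne_zero_of_span_rows_eq_top {M : Matrix m n K}
    (hM : Submodule.span K (Set.range M) = ⊤) :
    ∃ s : n → m, (M.submatrix s id).det ≠ 0 := by
  obtain ⟨κ, a, -, hspan, hli⟩ := exists_linearIndependent' K M
  let b : Module.Basis κ K (n → K) := .mk hli (by rw [hspan, hM])
  let e : n ≃ κ := (Pi.basisFun K n).indexEquiv b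
  refine ⟨a ∘ e, ?_⟩
  have hrows : LinearIndependent K (M.submatrix (a ∘ e) id).row := hli.comp e e.injective
  exact (isUnit_iff_isUnit_det _).mp (linearIndependent_rows_iff_isUnit.mp hrows) |>.ne_zero

theorem exists_mulVec_eq_zero_iff_forall_det_submatrix_eq_zero (M : Matrix m n K) :
    (∃ v ≠ 0, M *ᵥ v = 0) ↔ ∀ s : n → m, (M.submatrix s id).det = 0 := by
  refine ⟨fun ⟨v, hv, hMv⟩ s => exists_mulVec_eq_zero_iff.mp ⟨v, hv, ?_⟩, fun h => ?_⟩
  · ext i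
    exact congrFun hMv (s i)
  · by_cases hM : Submodule.span K (Set.range M) = ⊤
    · obtain ⟨s, hs⟩ := exists_det_submatrix_ne_zero_of_span_rows_eq_top hM
      exact absurd (h s) hs
    · exact exists_mulVec_eq_zero_of_span_rows_ne_top hM

end Field

section CommRing

variable {n R S : Type*} [Fintype n] [DecidableEq n] [CommRing R] [CommRing S]

def commutatorRows (A B : Matrix n n R) : Matrix ((ℕ × ℕ) × n) n R :=
  of fun r => (A ^ r.1.1 * B ^ r.1.2 - B ^ r.1.2 * A ^ r.1.1) r.2

theorem map_commutatorRows (A B : Matrix n n R) (φ : R →+* S) :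
    (commutatorRows A B).map φ = commutatorRows (A.map φ) (B.map φ) := by
  ext r c
  change φ.mapMatrix (A ^ r.1.1 * B ^ r.1.2 - B ^ r.1.2 * A ^ r.1.1) r.2 c = _
  simp only [map_sub, map_mul, map_pow]
  rfl

theorem commutatorRows_mulVec_eq_zero_iff {A B : Matrix n n R} {v : n → R} :
    commutatorRows A B *ᵥ v = 0 ↔ v ∈ Module.End.shemeshSubspace (toLin' A) (toLin' B) := by
  have hrow (M N : Matrix n n R) (i j : ℕ) :
      (toLin' M ^ i * toLin' N ^ j) v = (M ^ i * N ^ j) *ᵥ v := by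
    simp [← toLin'_pow, Module.End.mul_eq_comp, ← toLin'_mul]
  have hrows : commutatorRows A B *ᵥ v = 0 ↔
      ∀ (i j : ℕ) (k : n), ((A ^ i * B ^ j - B ^ j * A ^ i) *ᵥ v) k = 0 := by
    simp only [funext_iff, Prod.forall]
    rfl
  simp only [hrows, Module.End.mem_shemeshSubspace, hrow, sub_mulVec, Pi.sub_apply, sub_eq_zero,
    funext_iff]

end CommRing

variable {n K : Type*} [Fintype n] [DecidableEq n] [Field K]

theorem exists_common_eigenvector_iff_forall_det_submatrix_commutatorRows [IsAlgClosed K]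
    (A B : Matrix n n K) :
    (∃ v ≠ 0, (∃ a : K, A *ᵥ v = a • v) ∧ ∃ b : K, B *ᵥ v = b • v) ↔
      ∀ s : n → (ℕ × ℕ) × n, ((commutatorRows A B).submatrix s id).det = 0 := by
  rw [← exists_mulVec_eq_zero_iff_forall_det_submatrix_eq_zero]
  simp only [commutatorRows_mulVec_eq_zero_iff]
  have h := Module.End.exists_common_eigenvector_iff_shemeshSubspace_ne_bot (f := toLin' A)
    (g := toLin' B)
  simp only [toLin'_apply, Submodule.ne_bot_iff] at h
  rw [h]
  exact exists_congr fun v => and_comm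

theorem not_exists_common_eigenvector_diagonal_ones [Nontrivial n] {d : n → K}
    (hd : Function.Injective d) :
    ¬ ∃ v ≠ 0, (∃ a : K, diagonal d *ᵥ v = a • v) ∧
      ∃ b : K, of (fun _ _ => (1 : K)) *ᵥ v = b • v := by
  rintro ⟨v, hv, ⟨a, ha⟩, b, hb⟩
  obtain ⟨k, hk⟩ : ∃ k, v k ≠ 0 := Function.ne_iff.mp hv
  have ha' (i : n) : d i * v i = a * v i := by simpa [mulVec_diagonal] using congrFun ha i
  have hsupp (l : n) (hl : l ≠ k) : v l = 0 := by
    have hak : a = d k := mul_right_cancel₀ hk (ha' k).symm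
    have : (d l - d k) * v l = 0 := by rw [sub_mul, ha' l, hak, sub_self]
    exact (mul_eq_zero.mp this).resolve_left (sub_ne_zero.mpr (hd.ne hl))
  obtain ⟨l, hl⟩ := exists_ne k
  have hsum : ∑ i, v i = v k := Finset.sum_eq_single k (fun i _ hi => hsupp i hi) (by simp)
  have hbl : ∑ i, v i = b * v l := by simpa [mulVec, dotProduct] using congrFun hb l
  exact hk (by rw [← hsum, hbl, hsupp l hl, mul_zero])

end Matrix

namespace MvPolynomial

open Polynomial Filter Topology

theorem exists_polynomial_eval_eq_eval_add_smul {σ R : Type*} [CommRing R]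
    (P : MvPolynomial σ R) (x y : σ → R) :
    ∃ Q : R[X], ∀ t, Q.eval t = eval (x + t • y) P := by
  refine ⟨eval₂ Polynomial.C
    (fun i => Polynomial.C (x i) + Polynomial.X * Polynomial.C (y i)) P, fun t => ?_⟩
  have hC : (evalRingHom t).comp Polynomial.C = RingHom.id R := by ext; simp
  rw [polynomial_eval_eval₂, hC]
  congr 1
  ext i
  simp only [Polynomial.eval_add, Polynomial.eval_mul, Polynomial.eval_C, Polynomial.eval_X,
    Pi.add_apply, Pi.smul_apply, smul_eq_mul]

theorem eval_eq_zero_of_eventually_eval_eq_zero {𝕜 σ E : Type*} [NontriviallyNormedField 𝕜]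
    [AddCommGroup E] [Module 𝕜 E] [TopologicalSpace E] [ContinuousAdd E] [ContinuousSMul 𝕜 E]
    (c : E →ₗ[𝕜] σ → 𝕜) {P : MvPolynomial σ 𝕜} {p : E}
    (h : ∀ᶠ x in 𝓝 p, eval (c x) P = 0) (q : E) : eval (c q) P = 0 := by
  obtain ⟨Q, hQ⟩ := P.exists_polynomial_eval_eq_eval_add_smul (c p) (c (q - p))
  have hline : Tendsto (fun t : 𝕜 => p + t • (q - p)) (𝓝 0) (𝓝 p) := by
    have hcont : Continuous fun t : 𝕜 => p + t • (q - p) := by fun_prop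
    simpa using hcont.tendsto 0
  have hroots : ∀ᶠ t in 𝓝 (0 : 𝕜), Q.IsRoot t :=
    (hline.eventually h).mono fun t ht => by simpa [IsRoot, hQ] using ht
  have hQ0 : Q = 0 := Q.eq_zero_of_infinite_isRoot (infinite_of_mem_nhds 0 hroots)
  simpa [hQ0] using (hQ 1).symm

end MvPolynomial

namespace Matrix

open MvPolynomial

variable (n R : Type*) [CommRing R]

def pairEntries : (Matrix n n R × Matrix n n R) →ₗ[R] ((n × n) ⊕ (n × n) → R) where
  toFun p := Sum.elim (fun ij => p.1 ij.1 ij.2) (fun ij => p.2 ij.1 ij.2)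
  map_add' _ _ := by ext (_ | _) <;> rfl
  map_smul' _ _ := by ext (_ | _) <;> rfl

noncomputable def genericLeft : Matrix n n (MvPolynomial ((n × n) ⊕ (n × n)) R) :=
  of fun i j => X (.inl (i, j))

noncomputable def genericRight : Matrix n n (MvPolynomial ((n × n) ⊕ (n × n)) R) :=
  of fun i j => X (.inr (i, j))

variable [Fintype n] [DecidableEq n]

noncomputable def commutatorMinor (s : n → (ℕ × ℕ) × n) :
    MvPolynomial ((n × n) ⊕ (n × n)) R :=
  ((commutatorRows (genericLeft n R) (genericRight n R)).submatrix s id).det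

variable {n R}

theorem eval_commutatorMinor (p : Matrix n n R × Matrix n n R) (s : n → (ℕ × ℕ) × n) :
    eval (pairEntries n R p) (commutatorMinor n R s) =
      ((commutatorRows p.1 p.2).submatrix s id).det := by
  have hL : (genericLeft n R).map (eval (pairEntries n R p)) = p.1 := by
    ext; simp [genericLeft, pairEntries]
  have hR : (genericRight n R).map (eval (pairEntries n R p)) = p.2 := by
    ext; simp [genericRight, pairEntries]
  rw [commutatorMinor, RingHom.map_det, RingHom.mapMatrix_apply, ← submatrix_map,
    map_commutatorRows, hL, hR]

end Matrix

open Matrix Topology in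
theorem common_eigenvector_pairs_zariski_closed_proper {n : ℕ} (hn : 2 ≤ n) :
    let V : Set (Matrix (Fin n) (Fin n) ℂ × Matrix (Fin n) (Fin n) ℂ) :=
      {p | ∃ v : Fin n → ℂ, v ≠ 0 ∧ (∃ lam : ℂ, p.1 *ᵥ v = lam • v) ∧
        (∃ mu : ℂ, p.2 *ᵥ v = mu • v)}
    (∃ (ι : Type) (f : ι → MvPolynomial ((Fin n × Fin n) ⊕ (Fin n × Fin n)) ℂ),
      V = {p | ∀ i : ι, MvPolynomial.eval
        (Sum.elim (fun ij => p.1 ij.1 ij.2) (fun ij => p.2 ij.1 ij.2)) (f i) = 0}) ∧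
    V ≠ Set.univ ∧ interior V = ∅ := by
  intro V
  have hV (p) : p ∈ V ↔
      ∀ s, MvPolynomial.eval (pairEntries _ ℂ p) (commutatorMinor _ ℂ s) = 0 := by
    simp only [eval_commutatorMinor]
    exact exists_common_eigenvector_iff_forall_det_submatrix_commutatorRows p.1 p.2
  have : Nontrivial (Fin n) := Fin.nontrivial_iff_two_le.mpr hn
  let p₀ : Matrix (Fin n) (Fin n) ℂ × Matrix (Fin n) (Fin n) ℂ :=
    (diagonal fun i => (i : ℂ), of fun _ _ => 1)
  have hp₀ : p₀ ∉ V :=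
    not_exists_common_eigenvector_diagonal_ones (Nat.cast_injective.comp Fin.val_injective)
  obtain ⟨s, hs⟩ : ∃ s, MvPolynomial.eval (pairEntries _ ℂ p₀) (commutatorMinor _ ℂ s) ≠ 0 := by
    simpa [hV] using hp₀
  refine ⟨⟨_, commutatorMinor _ ℂ, Set.ext hV⟩, fun h => hp₀ (h ▸ Set.mem_univ p₀), ?_⟩
  refine Set.eq_empty_iff_forall_notMem.mpr fun p hp => hs ?_
  have hnear : ∀ᶠ q in 𝓝 p, MvPolynomial.eval (pairEntries _ ℂ q) (commutatorMinor _ ℂ s) = 0 :=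
    Filter.eventually_of_mem (mem_interior_iff_mem_nhds.mp hp) fun q hq => (hV q).mp hq s
  exact MvPolynomial.eval_eq_zero_of_eventually_eval_eq_zero (pairEntries _ ℂ) hnear p₀
end

section
/- Let S = {x ∈ ℝ^d : A(x) ⪰ 0} be a spectrahedral cone for a linear symmetric matrix map A, and let p be a point in the relative interior of S. Then the linear hull of S equals {x ∈ ℝ^d : ker A(p) ⊆ ker A(x)}. -/
/-!
If `x ∈ S`, the relative interior point `p` can be pushed past itself away from `x`:
`q = p + s • (p - x) ∈ S` for small `s > 0`. Then `(1 + s) A(p) = A(q) + s A(x)` is a sum of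
positive semidefinite matrices, so `ker A(p) ⊆ ker A(x)`; as this condition cuts out a subspace,
it holds on all of `lin S`. Conversely, if `ker A(p) ⊆ ker A(x)`, then `A(p) + ε A(x) ⪰ 0` for
small `ε > 0`: on a complement of `ker A(p)` this follows from compactness of the unit sphere,
where `A(p)` is positive definite. Hence `p + ε x ∈ S` and `x ∈ lin S`.
-/

open Matrix Filter Topology

section IntrinsicInterior

variable {𝕜 V P : Type*} [Ring 𝕜] [TopologicalSpace 𝕜] [AddCommGroup V] [Module 𝕜 V]
  [TopologicalSpace V] [ContinuousSMul 𝕜 V] [TopologicalSpace P] [AddTorsor V P]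
  [IsTopologicalAddTorsor P]

theorem eventually_lineMap_mem_of_mem_intrinsicInterior {s : Set P} {p x : P}
    (hp : p ∈ intrinsicInterior 𝕜 s) (hx : x ∈ affineSpan 𝕜 s) :
    ∀ᶠ t in 𝓝 (0 : 𝕜), AffineMap.lineMap p x t ∈ s := by
  obtain ⟨y, hy, rfl⟩ := mem_intrinsicInterior.mp hp
  let f : 𝕜 → affineSpan 𝕜 s := fun t => ⟨AffineMap.lineMap (y : P) x t,
    AffineMap.lineMap_mem t y.2 hx⟩
  have hf : Continuous f := AffineMap.lineMap_continuous.subtype_mk _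
  have hf0 : f 0 = y := Subtype.ext (AffineMap.lineMap_apply_zero _ _)
  filter_upwards [hf.continuousAt.preimage_mem_nhds (hf0 ▸ isOpen_interior.mem_nhds hy)]
    with t ht using interior_subset (s := ((↑) ⁻¹' s : Set (affineSpan 𝕜 s))) ht

end IntrinsicInterior

theorem IsCompact.eventually_forall_pos_add_mul {X : Type*} [TopologicalSpace X] {K : Set X}
    (hK : IsCompact K) {f g : X → ℝ} (hf : Continuous f) (hg : Continuous g)
    (hpos : ∀ x ∈ K, 0 < f x) : ∀ᶠ ε in 𝓝 (0 : ℝ), ∀ x ∈ K, 0 < f x + ε * g x :=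
  hK.eventually_forall_of_forall_eventually fun x hx =>
    continuousAt_const.eventually_lt (by fun_prop) (by simpa using hpos x hx)

namespace Matrix

variable {ι : Type*} [Fintype ι]

open scoped ComplexOrder in
theorem PosSemidef.mulVec_eq_zero_of_add {𝕜 : Type*} [RCLike 𝕜] {M N : Matrix ι ι 𝕜}
    (hM : M.PosSemidef) (hN : N.PosSemidef) {v : ι → 𝕜} (h : (M + N) *ᵥ v = 0) :
    N *ᵥ v = 0 := by
  have hsum : star v ⬝ᵥ M *ᵥ v + star v ⬝ᵥ N *ᵥ v = 0 := by
    rw [← dotProduct_add, ← add_mulVec, h, dotProduct_zero]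
  exact (hN.dotProduct_mulVec_zero_iff v).mp <|
    ((add_eq_zero_iff_of_nonneg (hM.dotProduct_mulVec_nonneg v)
      (hN.dotProduct_mulVec_nonneg v)).mp hsum).2

theorem IsSymm.dotProduct_mulVec_add_of_mulVec_eq_zero {R : Type*} [CommSemiring R]
    {X : Matrix ι ι R} (hX : X.IsSymm) {w v : ι → R} (hw : X *ᵥ w = 0) :
    (w + v) ⬝ᵥ X *ᵥ (w + v) = v ⬝ᵥ X *ᵥ v := by
  rw [mulVec_add, hw, zero_add, add_dotProduct, dotProduct_mulVec, ← mulVec_transpose, hX.eq,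
    hw, zero_dotProduct, zero_add]

theorem posSemidef_of_isCompl {X : Matrix ι ι ℝ} (hX : X.IsHermitian)
    {W K : Submodule ℝ (ι → ℝ)} (hWK : IsCompl W K) (hW : ∀ w ∈ W, X *ᵥ w = 0)
    (hK : ∀ v ∈ K, 0 ≤ v ⬝ᵥ X *ᵥ v) : X.PosSemidef := by
  refine .of_dotProduct_mulVec_nonneg hX fun u => ?_
  obtain ⟨w, v, rfl, -⟩ := Submodule.existsUnique_add_of_isCompl hWK u
  rw [star_trivial, (isHermitian_iff_isSymm.mp hX).dotProduct_mulVec_add_of_mulVec_eq_zero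
    (hW w w.2)]
  exact hK v v.2

theorem dotProduct_mulVec_nonneg_of_norm_eq_one {X : Matrix ι ι ℝ}
    {K : Submodule ℝ (ι → ℝ)}
    (h : ∀ u ∈ K, ‖u‖ = 1 → 0 ≤ u ⬝ᵥ X *ᵥ u) {v : ι → ℝ} (hv : v ∈ K) :
    0 ≤ v ⬝ᵥ X *ᵥ v := by
  rcases eq_or_ne v 0 with rfl | hv0
  · simp
  have hnorm : 0 < ‖v‖ := norm_pos_iff.mpr hv0
  have := h (‖v‖⁻¹ • v) (K.smul_mem _ hv) (by simp [norm_smul, hnorm.ne'])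
  rw [smul_dotProduct, mulVec_smul, dotProduct_smul, smul_eq_mul, smul_eq_mul,
    ← mul_assoc] at this
  exact nonneg_of_mul_nonneg_right this (by positivity)

theorem PosSemidef.exists_pos_posSemidef_add_smul {B C : Matrix ι ι ℝ} (hB : B.PosSemidef)
    (hC : C.IsHermitian) (hker : ∀ v, B *ᵥ v = 0 → C *ᵥ v = 0) :
    ∃ ε : ℝ, 0 < ε ∧ (B + ε • C).PosSemidef := by
  obtain ⟨K, hK⟩ := Submodule.exists_isCompl (LinearMap.ker B.mulVecLin)
  have hcompact : IsCompact (Metric.sphere 0 1 ∩ (K : Set (ι → ℝ))) :=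
    (isCompact_sphere 0 1).inter_right K.closed_of_finiteDimensional
  have hBpos : ∀ u ∈ Metric.sphere 0 1 ∩ (K : Set (ι → ℝ)), 0 < u ⬝ᵥ B *ᵥ u := by
    rintro u ⟨hu1, huK⟩
    have hu0 : u ≠ 0 := ne_zero_of_mem_unit_sphere ⟨u, hu1⟩
    refine (hB.dotProduct_mulVec_nonneg u).lt_of_ne' fun h => hu0 ?_
    have hBu : B *ᵥ u = 0 := (hB.dotProduct_mulVec_zero_iff u).mp h
    exact Submodule.disjoint_def.mp hK.disjoint u hBu huK
  obtain ⟨ε, hε, hεpos⟩ :=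
    (hcompact.eventually_forall_pos_add_mul (f := fun u => u ⬝ᵥ B *ᵥ u)
      (g := fun u => u ⬝ᵥ C *ᵥ u) (by fun_prop) (by fun_prop) hBpos).exists_gt
  refine ⟨ε, hε,
    posSemidef_of_isCompl (hB.isHermitian.add (hC.smul (IsSelfAdjoint.all ε))) hK ?_ ?_⟩
  · intro w hw
    rw [add_mulVec, smul_mulVec, hker w hw, smul_zero, show B *ᵥ w = 0 from hw, zero_add]
  · refine fun v hv => dotProduct_mulVec_nonneg_of_norm_eq_one (fun u huK hu1 => ?_) hv
    rw [add_mulVec, smul_mulVec, dotProduct_add, dotProduct_smul, smul_eq_mul]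
    exact (hεpos u ⟨by simpa using hu1, huK⟩).le

end Matrix

def LinearMap.kerSupsetSubmodule {R V m n : Type*} [CommRing R] [AddCommGroup V] [Module R V]
    [Fintype n] (A : V →ₗ[R] Matrix m n R) (M : Matrix m n R) : Submodule R V where
  carrier := {x | ∀ v, M *ᵥ v = 0 → A x *ᵥ v = 0}
  add_mem' {x y} hx hy v hv := by rw [map_add, add_mulVec, hx v hv, hy v hv, add_zero]
  zero_mem' v _ := by rw [map_zero, zero_mulVec]
  smul_mem' c x hx v hv := by rw [map_smul, smul_mulVec, hx v hv, smul_zero]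

theorem linear_hull_of_spectrahedral_cone {d n : ℕ}
    (A : (Fin d → ℝ) →ₗ[ℝ] Matrix (Fin n) (Fin n) ℝ) (hA : ∀ x, (A x).IsSymm)
    (S : Set (Fin d → ℝ)) (hS : S = {x | (A x).PosSemidef})
    (p : Fin d → ℝ) (hp : p ∈ intrinsicInterior ℝ S) :
    (Submodule.span ℝ S : Set (Fin d → ℝ)) =
      {x | ∀ v : Fin n → ℝ, A p *ᵥ v = 0 → A x *ᵥ v = 0} := by
  subst hS
  have hpS : (A p).PosSemidef := intrinsicInterior_subset (s := {x | (A x).PosSemidef}) hp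
  suffices Submodule.span ℝ {x | (A x).PosSemidef} = A.kerSupsetSubmodule (A p) from
    congrArg SetLike.coe this
  refine le_antisymm (Submodule.span_le.mpr fun x hx v hv => ?_) fun x hx => ?_
  · obtain ⟨t, ht, hq⟩ := (eventually_lineMap_mem_of_mem_intrinsicInterior hp
      (subset_affineSpan ℝ _ hx)).exists_lt
    have hsum : (A (AffineMap.lineMap p x t) + (-t) • A x) *ᵥ v = 0 := by
      rw [AffineMap.lineMap_apply_module, map_add, map_smul, map_smul, neg_smul,
        add_neg_cancel_right, smul_mulVec, hv, smul_zero]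
    have htx := hq.mulVec_eq_zero_of_add (hx.smul (neg_nonneg.mpr ht.le)) hsum
    rwa [smul_mulVec, smul_eq_zero_iff_right (neg_ne_zero.mpr ht.ne)] at htx
  · obtain ⟨ε, hε, hpx⟩ :=
      hpS.exists_pos_posSemidef_add_smul (isHermitian_iff_isSymm.mpr (hA x)) hx
    have hpx' : p + ε • x ∈ Submodule.span ℝ {x | (A x).PosSemidef} :=
      Submodule.subset_span (show (A (p + ε • x)).PosSemidef by rwa [map_add, map_smul])
    have hx_eq : ε⁻¹ • (p + ε • x - p) = x := by
      rw [add_sub_cancel_left, inv_smul_smul₀ hε.ne']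
    exact hx_eq ▸ Submodule.smul_mem _ _ (sub_mem hpx' (Submodule.subset_span hpS))
end

section
/- Let S = {x ∈ ℝ^d : A(x) ⪰ 0} be a spectrahedral cone with p ∈ relint S, and let Ā(x) be the compression of A(x) to the orthogonal complement of ker A(p). Then for every x in the linear hull of S, one has x ∈ S if and only if Ā(x) ⪰ 0; moreover Ā(p) ≻ 0. -/
/-!
For `s ∈ S`, a relative-interior point `p` can be pushed slightly beyond itself away from `s`
inside `S`. On `ker A(p)` the quadratic form of `A(p + ε(p - s))` is `-ε` times that of `A(s)`,
so `ker A(p) ⊆ ker A(s)`, and by linearity `ker A(p) ⊆ ker A(x)` on the linear hull of `S`.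
With `P = M₀M₀ᵀ` the orthogonal projection onto `(ker A(p))ᗮ` this gives `A(x) = P A(x) P
= M₀ Ā(x) M₀ᵀ`, whence `A(x) ⪰ 0 ↔ Ā(x) ⪰ 0`. Finally `Ā(p) ⪰ 0`, and `yᵀ Ā(p) y = 0` puts
`M₀ y` in `ker A(p) ∩ (ker A(p))ᗮ = 0`.
-/

open Matrix Filter Topology
open scoped ComplexOrder

theorem eventually_lineMap_mem_of_mem_intrinsicInterior_s10 {𝕜 V : Type*} [Ring 𝕜]
    [TopologicalSpace 𝕜] [AddCommGroup V] [Module 𝕜 V] [TopologicalSpace V]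
    [IsTopologicalAddGroup V] [ContinuousSMul 𝕜 V] {s : Set V} {p q : V}
    (hp : p ∈ intrinsicInterior 𝕜 s) (hq : q ∈ affineSpan 𝕜 s) :
    ∀ᶠ t in 𝓝 (0 : 𝕜), AffineMap.lineMap p q t ∈ s := by
  obtain ⟨p, hp, rfl⟩ := hp
  let f : 𝕜 → affineSpan 𝕜 s := fun t =>
    ⟨AffineMap.lineMap (p : V) q t, AffineMap.lineMap_mem t p.2 hq⟩
  have hf : Continuous f := AffineMap.lineMap_continuous.subtype_mk _
  have hf0 : f 0 = p := Subtype.ext (AffineMap.lineMap_apply_zero _ _)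
  have hp' : interior ((↑) ⁻¹' s) ∈ 𝓝 (f 0) := hf0 ▸ isOpen_interior.mem_nhds hp
  exact mem_of_superset (hf.continuousAt.preimage_mem_nhds hp')
    fun _ ht => interior_subset (s := ((↑) ⁻¹' s : Set (affineSpan 𝕜 s))) ht

theorem Matrix.PosSemidef.mulVec_eq_zero_of_posSemidef_lineMap {n : Type*} [Fintype n]
    {P B : Matrix n n ℝ} {t : ℝ} {w : n → ℝ} (hB : B.PosSemidef) (ht : t < 0)
    (hline : (AffineMap.lineMap P B t).PosSemidef) (hw : P *ᵥ w = 0) : B *ᵥ w = 0 := by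
  have hquad : w ⬝ᵥ (AffineMap.lineMap P B t *ᵥ w) = t * (w ⬝ᵥ (B *ᵥ w)) := by
    simp [AffineMap.lineMap_apply_module, add_mulVec, smul_mulVec, hw]
  have h1 := hB.dotProduct_mulVec_nonneg w
  have h2 := hline.dotProduct_mulVec_nonneg w
  simp only [star_trivial, hquad] at h1 h2
  exact (hB.dotProduct_mulVec_zero_iff w).mp (by simp only [star_trivial]; nlinarith)

theorem Matrix.mul_eq_self_of_ker_le {R n : Type*} [CommRing R] [Fintype n]
    {P B Q : Matrix n n R} (hker : ∀ w, P *ᵥ w = 0 → B *ᵥ w = 0) (hPQ : P * Q = P) :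
    B * Q = B := by
  refine ext_iff_mulVec.mpr fun v => ?_
  have : P *ᵥ (v - Q *ᵥ v) = 0 := by
    rw [mulVec_sub, mulVec_mulVec, hPQ, sub_self]
  rw [← mulVec_mulVec, ← sub_eq_zero, ← mulVec_sub, ← neg_sub, mulVec_neg, hker _ this, neg_zero]

theorem Matrix.mul_conjTranspose_mul_eq_self {R n m : Type*} [CommRing R] [StarRing R]
    [Fintype n] [Fintype m] [DecidableEq m] {M : Matrix n m R} {B : Matrix n n R}
    (hM : Mᴴ * M = 1) (hB : ∀ u, ∃ y, M *ᵥ y = B *ᵥ u) : M * Mᴴ * B = B := by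
  refine ext_iff_mulVec.mpr fun u => ?_
  obtain ⟨y, hy⟩ := hB u
  rw [← mulVec_mulVec, ← hy, mulVec_mulVec, Matrix.mul_assoc, hM, Matrix.mul_one]

theorem Matrix.IsHermitian.posSemidef_iff_conjTranspose_mul_mul {R n m : Type*} [CommRing R]
    [PartialOrder R] [StarRing R] [Fintype n] [Fintype m] {M : Matrix n m R}
    {B : Matrix n n R} (hB : B.IsHermitian) (hBM : B * (M * Mᴴ) = B) :
    B.PosSemidef ↔ (Mᴴ * B * M).PosSemidef := by
  refine ⟨fun h => h.conjTranspose_mul_mul_same M, fun h => ?_⟩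
  have hMB : M * Mᴴ * B = B := by
    simpa [conjTranspose_mul, hB.eq, Matrix.mul_assoc] using congrArg (·ᴴ) hBM
  have hfactor : M * (Mᴴ * B * M) * Mᴴ = B := by
    rw [← Matrix.mul_assoc, ← Matrix.mul_assoc, hMB, Matrix.mul_assoc, hBM]
  simpa [hfactor] using h.mul_mul_conjTranspose_same M

theorem Matrix.mulVec_eq_zero_of_mem_intrinsicInterior_spectrahedron {E n : Type*}
    [AddCommGroup E] [Module ℝ E] [TopologicalSpace E] [IsTopologicalAddGroup E]
    [ContinuousSMul ℝ E] [Fintype n] (A : E →ₗ[ℝ] Matrix n n ℝ) {p s : E} {w : n → ℝ}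
    (hp : p ∈ intrinsicInterior ℝ {x | (A x).PosSemidef}) (hs : (A s).PosSemidef)
    (hw : A p *ᵥ w = 0) : A s *ᵥ w = 0 := by
  obtain ⟨t, hline, ht⟩ := ((eventually_lineMap_mem_of_mem_intrinsicInterior_s10 hp
    (subset_affineSpan ℝ _ hs)).filter_mono nhdsWithin_le_nhds |>.and
    (self_mem_nhdsWithin (s := Set.Iio 0))).exists
  refine hs.mulVec_eq_zero_of_posSemidef_lineMap ht ?_ hw
  simpa only [Set.mem_ofPred_eq, ← A.coe_toAffineMap, AffineMap.apply_lineMap] using hline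

theorem Matrix.mulVec_eq_zero_of_mem_span {R E n : Type*} [CommRing R] [AddCommGroup E]
    [Module R E] [Fintype n] (A : E →ₗ[R] Matrix n n R) {S : Set E} {w : n → R}
    (h : ∀ s ∈ S, A s *ᵥ w = 0) {x : E} (hx : x ∈ Submodule.span R S) : A x *ᵥ w = 0 := by
  induction hx using Submodule.span_induction with
  | mem s hs => exact h s hs
  | zero => simp
  | add a b _ _ ha hb => simp [add_mulVec, ha, hb]
  | smul c a _ ha => simp [smul_mulVec, ha]

theorem Matrix.PosSemidef.posDef_conjTranspose_mul_mul {𝕜 n m : Type*} [RCLike 𝕜] [Fintype n]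
    [Fintype m] {B : Matrix n n 𝕜} {M : Matrix n m 𝕜} (hB : B.PosSemidef)
    (hM : Function.Injective M.mulVec) (hker : ∀ y w, B *ᵥ w = 0 → star (M *ᵥ y) ⬝ᵥ w = 0) :
    (Mᴴ * B * M).PosDef := by
  refine PosDef.of_dotProduct_mulVec_pos (hB.conjTranspose_mul_mul_same M).isHermitian
    fun y hy => ?_
  have hquad : star y ⬝ᵥ ((Mᴴ * B * M) *ᵥ y) = star (M *ᵥ y) ⬝ᵥ (B *ᵥ (M *ᵥ y)) := by
    simp only [star_mulVec, dotProduct_mulVec, vecMul_vecMul]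
  rw [hquad]
  refine (hB.dotProduct_mulVec_nonneg _).lt_of_ne fun h0 => hy (hM ?_)
  have hBMy := (hB.dotProduct_mulVec_zero_iff _).mp h0.symm
  rw [mulVec_zero]
  exact dotProduct_star_self_eq_zero.mp (hker y _ hBMy)

theorem compression_describes_spectrahedron_on_linear_hull {d n m : ℕ}
    (A : (Fin d → ℝ) →ₗ[ℝ] Matrix (Fin n) (Fin n) ℝ) (hA : ∀ x, (A x).IsSymm)
    (S : Set (Fin d → ℝ)) (hS : S = {x | (A x).PosSemidef})
    (p : Fin d → ℝ) (hp : p ∈ intrinsicInterior ℝ S)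
    (M₀ : Matrix (Fin n) (Fin m) ℝ)
    (horth : M₀ᵀ * M₀ = 1)
    (hrange : ∀ v : Fin n → ℝ,
      (∃ y : Fin m → ℝ, M₀ *ᵥ y = v) ↔ (∀ w : Fin n → ℝ, A p *ᵥ w = 0 → v ⬝ᵥ w = 0)) :
    (∀ x ∈ Submodule.span ℝ S, (x ∈ S ↔ (M₀ᵀ * A x * M₀).PosSemidef)) ∧
    (M₀ᵀ * A p * M₀).PosDef := by
  subst hS
  have hherm (x) : (A x).IsHermitian := isHermitian_iff_isSymm.mpr (hA x)
  rw [← conjTranspose_eq_transpose_of_trivial] at horth ⊢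
  have hrangeAp (u : Fin n → ℝ) : ∃ y, M₀ *ᵥ y = A p *ᵥ u :=
    (hrange _).mpr fun w hw => by
      rw [dotProduct_comm, dotProduct_mulVec, ← mulVec_transpose, (hA p).eq, hw, zero_dotProduct]
  have hproj : A p * (M₀ * M₀ᴴ) = A p := by
    simpa [conjTranspose_mul, (hA p).eq, Matrix.mul_assoc] using
      congrArg conjTranspose (mul_conjTranspose_mul_eq_self horth hrangeAp)
  have hker (x) (hx : x ∈ Submodule.span ℝ {x | (A x).PosSemidef}) : A x * (M₀ * M₀ᴴ) = A x :=
    mul_eq_self_of_ker_le (fun w hw => mulVec_eq_zero_of_mem_span A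
      (fun _ hs => mulVec_eq_zero_of_mem_intrinsicInterior_spectrahedron A hp hs hw) hx) hproj
  have hpS : (A p).PosSemidef := intrinsicInterior_subset (s := {x | (A x).PosSemidef}) hp
  refine ⟨fun x hx => (hherm x).posSemidef_iff_conjTranspose_mul_mul (hker x hx),
    hpS.posDef_conjTranspose_mul_mul ?_ ?_⟩
  · intro y z hyz
    simpa only [mulVec_mulVec, horth, one_mulVec] using congrArg (M₀ᴴ *ᵥ ·) hyz
  · intro y w hw
    simpa using (hrange _).mp ⟨y, rfl⟩ w hw
end

section
/- There is no rational invertible 2×2 matrix M such that M·A(x,y)·Mᵀ is diagonal for all (x,y) ∈ ℝ², where A(x,y) = [[2x, y],[y, x]]. -/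
/-!
Write `M = !![a, b; c, d]`. The off-diagonal entry of `M * !![k * x, y; y, x] * Mᵀ` is
`x * (k * a * c + b * d) + y * (a * d + b * c)`, so both coefficients vanish. Together with
`a * d - b * c ≠ 0` this forces `b ^ 2 = k * a ^ 2` with `a ≠ 0`, i.e. `k = (b / a) ^ 2`.
Over `ℚ` the case `k = 2` is impossible, as `2` is not a square there.
-/

open Matrix

theorem Matrix.mul_fin_two_symm_mul_transpose_apply_zero_one {R : Type*} [CommRing R]
    (M : Matrix (Fin 2) (Fin 2) R) (p r q : R) :
    (M * !![p, r; r, q] * Mᵀ) 0 1 =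
      p * (M 0 0 * M 1 0) + r * (M 0 0 * M 1 1 + M 0 1 * M 1 0) + q * (M 0 1 * M 1 1) := by
  simp only [mul_apply, of_apply, cons_val', cons_val_fin_one, Fin.sum_univ_two, cons_val_zero,
    cons_val_one, transpose_apply]
  ring

theorem isSquare_of_mul_add_eq_zero {K : Type*} [Field K] {k a b c d : K}
    (h₁ : k * (a * c) + b * d = 0) (h₂ : a * d + b * c = 0) (hdet : a * d - b * c ≠ 0) :
    IsSquare k := by
  have hc : c ≠ 0 := by
    rintro rfl
    exact hdet (by linear_combination h₂)
  have hb : b ^ 2 = k * a ^ 2 := mul_left_cancel₀ hc (by linear_combination b * h₂ - a * h₁)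
  have ha : a ≠ 0 := by
    rintro rfl
    have hb₀ : b = 0 := by simpa using hb
    exact hdet (by simp [hb₀])
  exact ⟨b / a, by field_simp; linear_combination -hb⟩

theorem isSquare_of_forall_isDiag_congr {K : Type*} [Field K] {k : K}
    {M : Matrix (Fin 2) (Fin 2) K} (hM : IsUnit M)
    (hdiag : ∀ x y : K, (M * !![k * x, y; y, x] * Mᵀ).IsDiag) : IsSquare k := by
  have hx : (M * !![k * 1, 0; 0, 1] * Mᵀ) 0 1 = 0 := hdiag 1 0 zero_ne_one
  have hy : (M * !![k * 0, 1; 1, 0] * Mᵀ) 0 1 = 0 := hdiag 0 1 zero_ne_one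
  rw [mul_fin_two_symm_mul_transpose_apply_zero_one] at hx hy
  have hdet : M.det ≠ 0 := ((isUnit_iff_isUnit_det M).mp hM).ne_zero
  rw [det_fin_two] at hdet
  exact isSquare_of_mul_add_eq_zero (by linear_combination hx) (by linear_combination hy) hdet

theorem Rat.not_isSquare_two : ¬IsSquare (2 : ℚ) := by
  rw [← Nat.cast_ofNat, Rat.isSquare_natCast_iff]
  exact Nat.prime_two.not_isSquare

theorem no_rational_congruence_diagonalization :
    ¬ ∃ M : Matrix (Fin 2) (Fin 2) ℚ, IsUnit M ∧
      ∀ x y : ℚ, (M * !![2 * x, y; y, x] * Mᵀ).IsDiag := by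
  rintro ⟨M, hM, hdiag⟩
  exact Rat.not_isSquare_two (isSquare_of_forall_isDiag_congr hM hdiag)
end

section
/- Let F be a face of the cone PSD_n of positive semidefinite n×n matrices containing a matrix P in its relative interior. Then F = {X ∈ PSD_n : ker P ⊆ ker X}, i.e., faces of the PSD cone are parametrized by kernels. -/
/-!
For PSD `X`, both `X ∈ F` and `ker P ⊆ ker X` are equivalent to `X ≤ c • P` (Loewner order) for
some `c ≥ 0`. If `X ∈ F`, the point `μ • P + (1 - μ) • X ∈ F` beyond `P` is PSD, which rearranges
to such a bound; conversely `X + (c • P - X) = c • P ∈ F` and `F` is a face. For the kernels,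
write `P = A⋆A` and `X = B⋆B`: the kernel inclusion factors `B = M A`, so `X = A⋆ (M⋆M) A ≤ c • P`
for any upper bound `c` of the spectrum of `M⋆M`.
-/

open Matrix

theorem LinearMap.exists_comp_eq_of_ker_le {K V V' W : Type*} [DivisionRing K]
    [AddCommGroup V] [Module K V] [AddCommGroup V'] [Module K V'] [AddCommGroup W] [Module K W]
    (f : V →ₗ[K] V') (g : V →ₗ[K] W) (h : ker f ≤ ker g) :
    ∃ m : V' →ₗ[K] W, m ∘ₗ f = g := by
  obtain ⟨m, hm⟩ := exists_extend ((ker f).liftQ g h ∘ₗ f.quotKerEquivRange.symm.toLinearMap)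
  refine ⟨m, ext fun v => ?_⟩
  simpa [quotKerEquivRange_symm_apply_image] using
    LinearMap.congr_fun hm ⟨f v, mem_range_self f v⟩

theorem Matrix.exists_mul_eq_of_mulVec_eq_zero_imp {K l m n : Type*} [Field K]
    [Fintype m] [Fintype n] [DecidableEq m] [DecidableEq n]
    {A : Matrix m n K} {B : Matrix l n K} (h : ∀ v, A *ᵥ v = 0 → B *ᵥ v = 0) :
    ∃ M : Matrix l m K, M * A = B := by
  obtain ⟨M, hM⟩ := (mulVecLin A).exists_comp_eq_of_ker_le (mulVecLin B) fun v => h v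
  refine ⟨LinearMap.toMatrix' M, toLin'.injective ?_⟩
  rwa [toLin'_mul, toLin'_toMatrix']

open ContinuousFunctionalCalculus in
theorem IsSelfAdjoint.exists_nonneg_le_algebraMap {A : Type*} [TopologicalSpace A] [Ring A]
    [StarRing A] [PartialOrder A] [StarOrderedRing A] [Algebra ℝ A]
    [ContinuousFunctionalCalculus ℝ A IsSelfAdjoint] {a : A} (ha : IsSelfAdjoint a) :
    ∃ r, 0 ≤ r ∧ a ≤ algebraMap ℝ A r := by
  obtain ⟨r, hr⟩ := (isCompact_iff_compactSpace.mpr inferInstance :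
    IsCompact (spectrum ℝ a)).bddAbove
  exact ⟨max r 0, le_max_right r 0,
    le_algebraMap_of_spectrum_le (fun x hx => (hr hx).trans (le_max_left r 0)) ha⟩

open scoped MatrixOrder ComplexOrder

namespace Matrix.PosSemidef

variable {n 𝕜 : Type*} [Fintype n] [RCLike 𝕜] {P X : Matrix n n 𝕜}

theorem mulVec_eq_zero_of_le_smul (hX : X.PosSemidef) {c : ℝ} (hXP : X ≤ c • P) {v : n → 𝕜}
    (hv : P *ᵥ v = 0) : X *ᵥ v = 0 := by
  have hle : 0 ≤ star v ⬝ᵥ ((c • P - X) *ᵥ v) := hXP.dotProduct_mulVec_nonneg v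
  rw [sub_mulVec, smul_mulVec, hv, smul_zero, zero_sub, dotProduct_neg, neg_nonneg] at hle
  exact (hX.dotProduct_mulVec_zero_iff v).mp (hle.antisymm (hX.dotProduct_mulVec_nonneg v))

theorem exists_le_smul_of_mulVec_eq_zero_imp [DecidableEq n] (hP : P.PosSemidef)
    (hX : X.PosSemidef) (h : ∀ v, P *ᵥ v = 0 → X *ᵥ v = 0) :
    ∃ c : ℝ, 0 ≤ c ∧ X ≤ c • P := by
  obtain ⟨A, rfl⟩ := CStarAlgebra.nonneg_iff_eq_star_mul_self.mp hP.nonneg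
  obtain ⟨B, rfl⟩ := CStarAlgebra.nonneg_iff_eq_star_mul_self.mp hX.nonneg
  obtain ⟨M, rfl⟩ : ∃ M, M * A = B := exists_mul_eq_of_mulVec_eq_zero_imp fun v hv =>
    (conjTranspose_mul_self_mulVec_eq_zero B v).mp
      (h v ((conjTranspose_mul_self_mulVec_eq_zero A v).mpr hv))
  obtain ⟨c, hc, hMc⟩ := (IsSelfAdjoint.star_mul_self M).exists_nonneg_le_algebraMap
  refine ⟨c, hc, ?_⟩
  calc star (M * A) * (M * A) = star A * (star M * M) * A := by simp only [star_mul, mul_assoc]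
    _ ≤ star A * algebraMap ℝ _ c * A := star_left_conjugate_le_conjugate hMc A
    _ = c • (star A * A) := by simp [Algebra.algebraMap_eq_smul_one]

end Matrix.PosSemidef

theorem face_of_psd_cone_parametrized_by_kernel_general {n : ℕ}
    (F : Set (Matrix (Fin n) (Fin n) ℝ))
    (hFsub : ∀ X ∈ F, X.PosSemidef)
    (hFcone : ∀ X ∈ F, ∀ c : ℝ, 0 ≤ c → c • X ∈ F)
    (hface : ∀ X Y : Matrix (Fin n) (Fin n) ℝ,
      X.PosSemidef → Y.PosSemidef → X + Y ∈ F → X ∈ F ∧ Y ∈ F)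
    (P : Matrix (Fin n) (Fin n) ℝ) (hP : P ∈ F)
    (hrelint : ∀ X ∈ F, ∃ μ : ℝ, 1 < μ ∧ μ • P + (1 - μ) • X ∈ F) :
    F = {X | X.PosSemidef ∧ ∀ v : Fin n → ℝ, P *ᵥ v = 0 → X *ᵥ v = 0} := by
  ext X
  refine ⟨fun hX => ⟨hFsub X hX, fun v hv => ?_⟩, fun ⟨hX, hker⟩ => ?_⟩
  · obtain ⟨μ, hμ, hY⟩ := hrelint X hX
    have hμ1 : 0 < μ - 1 := sub_pos.mpr hμ
    have hXP : X ≤ ((μ - 1)⁻¹ * μ) • P := by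
      have hdiff : ((μ - 1)⁻¹ * μ) • P - X = (μ - 1)⁻¹ • (μ • P + (1 - μ) • X) := by
        match_scalars <;> field_simp
        ring
      rw [le_iff, hdiff]
      exact (hFsub _ hY).smul (inv_nonneg.mpr hμ1.le)
    exact (hFsub X hX).mulVec_eq_zero_of_le_smul hXP hv
  · obtain ⟨c, hc, hXP⟩ := (hFsub P hP).exists_le_smul_of_mulVec_eq_zero_imp hX hker
    refine (hface X (c • P - X) hX (le_iff.mp hXP) ?_).1
    rw [add_sub_cancel]
    exact hFcone P hP c hc

theorem face_of_psd_cone_parametrized_by_kernel {n : ℕ}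
    (F : Set (Matrix (Fin n) (Fin n) ℝ))
    (hFsub : ∀ X ∈ F, X.PosSemidef)
    (hFcone : ∀ X ∈ F, ∀ c : ℝ, 0 ≤ c → c • X ∈ F)
    (hFconvex : ∀ X ∈ F, ∀ Y ∈ F, X + Y ∈ F)
    (hface : ∀ X Y : Matrix (Fin n) (Fin n) ℝ,
      X.PosSemidef → Y.PosSemidef → X + Y ∈ F → X ∈ F ∧ Y ∈ F)
    (P : Matrix (Fin n) (Fin n) ℝ) (hP : P ∈ F)
    (hrelint : ∀ X ∈ F, ∃ μ : ℝ, 1 < μ ∧ μ • P + (1 - μ) • X ∈ F) :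
    F = {X | X.PosSemidef ∧ ∀ v : Fin n → ℝ, P *ᵥ v = 0 → X *ᵥ v = 0} :=
  face_of_psd_cone_parametrized_by_kernel_general F hFsub hFcone hface P hP hrelint
end
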